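/- Let Φ ∈ P(M,N) and Ψ ∈ P(M,M−N) be Naimark complements (Ψ*Ψ = I − Φ*Φ). Then for every subset K ⊆ [M], det(Φ_K*Φ_K) = det(Ψ_{K^c} Ψ_{K^c}*), i.e., the product of the singular values of Φ_K equals the product of the singular values of Ψ_{K^c}. -/
import Mathlib


open Matrix Finset


noncomputable def colSub {N M : ℕ} (Φ : Matrix (Fin N) (Fin M) ℂ) (K : Finset (Fin M)) :
    Matrix (Fin N) ↥K ℂ := Φ.submatrix id (fun k => (k : Fin M))

/-- The k-dimensional volume of the parallelotope spanned by the columns of Φ indexed by K. -/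
noncomputable def vol {N M : ℕ} (Φ : Matrix (Fin N) (Fin M) ℂ) (K : Finset (Fin M)) : ℝ :=
  Real.sqrt (((colSub Φ K)ᴴ * colSub Φ K).det.re)

/-- For Naimark complements, the product of the singular values of Φ_K equals that of Ψ_{Kᶜ}. -/
theorem naimark_det {N L M : ℕ}
    (Φ : Matrix (Fin N) (Fin M) ℂ) (Ψ : Matrix (Fin L) (Fin M) ℂ)
    (hL : N + L = M)
    (hΦ : Φ * Φᴴ = 1) (hΨ : Ψ * Ψᴴ = 1)
    (hNaimark : Ψᴴ * Ψ = 1 - Φᴴ * Φ) :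
    ∀ K : Finset (Fin M),
      ((colSub Φ K)ᴴ * colSub Φ K).det = (colSub Ψ Kᶜ * (colSub Ψ Kᶜ)ᴴ).det := by
  intro K
  -- Step 1: Ψ_{Kᶜ} Ψ_{Kᶜ}ᴴ = 1 - Ψ_K Ψ_Kᴴ
  have h1 : colSub Ψ Kᶜ * (colSub Ψ Kᶜ)ᴴ = 1 - colSub Ψ K * (colSub Ψ K)ᴴ := by
    have hsum : colSub Ψ K * (colSub Ψ K)ᴴ + colSub Ψ Kᶜ * (colSub Ψ Kᶜ)ᴴ = Ψ * Ψᴴ := by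
      ext i j
      simp only [Matrix.add_apply, Matrix.mul_apply, colSub, Matrix.conjTranspose_apply,
        Matrix.submatrix_apply, id]
      rw [show (Finset.univ : Finset ↥K) = K.attach from rfl,
          show (Finset.univ : Finset ↥Kᶜ) = Kᶜ.attach from rfl,
          Finset.sum_attach K (fun k => Ψ i k * star (Ψ j k)),
          Finset.sum_attach Kᶜ (fun k => Ψ i k * star (Ψ j k)),
          Finset.sum_add_sum_compl]
    rw [hΨ] at hsum
    linear_combination (norm := abel) hsum
  -- Step 2: Ψ_Kᴴ Ψ_K = 1 - Φ_Kᴴ Φ_K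
  have h2 : (colSub Ψ K)ᴴ * colSub Ψ K = 1 - (colSub Φ K)ᴴ * colSub Φ K := by
    ext i j
    have hent := congrFun (congrFun hNaimark (i : Fin M)) (j : Fin M)
    simp only [Matrix.sub_apply, Matrix.mul_apply, Matrix.conjTranspose_apply] at hent
    simp only [Matrix.sub_apply, Matrix.mul_apply, colSub, Matrix.conjTranspose_apply,
      Matrix.submatrix_apply, id]
    rw [hent]
    congr 1
    simp only [Matrix.one_apply]
    by_cases h : i = j
    · simp [h]
    · have : (i : Fin M) ≠ (j : Fin M) := fun hc => h (Subtype.ext hc)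
      simp [h, this]
  rw [h1]
  have sylv : (1 - colSub Ψ K * (colSub Ψ K)ᴴ).det
      = (1 - (colSub Ψ K)ᴴ * colSub Ψ K).det := by
    rw [sub_eq_add_neg, sub_eq_add_neg, ← Matrix.mul_neg, ← Matrix.neg_mul,
      Matrix.det_one_add_mul_comm]
  rw [sylv, h2, sub_sub_cancel]
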